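/- Let n ≥ 3 and let a, b ∈ A_n be doubly pure. If b ∈ H_a then (a, ẽ_0, b) = 0 and (ẽ_0, a, b) = 0, while if b ∈ H_a^⊥ then (a, ẽ_0, b) = 2·ã·b and (ẽ_0, a, b) = −2·ã·b. -/

import Mathlib

noncomputable section

open scoped Quaternion

/-- The Cayley–Dickson algebra `A n = ℝ^(2^n)` as a type. -/
def CD : ℕ → Type
  | 0 => ℝ
  | n + 1 => CD n × CD n

namespace CD

instance instAddCommGroup : (n : ℕ) → AddCommGroup (CD n)
  | 0 => inferInstanceAs (AddCommGroup ℝ)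
  | n + 1 =>
    letI := instAddCommGroup n
    inferInstanceAs (AddCommGroup (CD n × CD n))

instance instModule : (n : ℕ) → Module ℝ (CD n)
  | 0 => inferInstanceAs (Module ℝ ℝ)
  | n + 1 =>
    letI := instModule n
    inferInstanceAs (Module ℝ (CD n × CD n))

/-- Conjugation in the Cayley–Dickson algebra. -/
def conj : {n : ℕ} → CD n → CD n
  | 0, x => x
  | _ + 1, x => (conj x.1, -x.2)

/-- Cayley–Dickson multiplication. -/
def mul : {n : ℕ} → CD n → CD n → CD n
  | 0, x, y => Mul.mul (α := ℝ) x y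
  | _ + 1, x, y =>
    (mul x.1 y.1 - mul (conj y.2) x.2, mul y.2 x.1 + mul x.2 (conj y.1))

instance instMul (n : ℕ) : Mul (CD n) := ⟨mul⟩

/-- The multiplicative unit `e₀`. -/
def one : {n : ℕ} → CD n
  | 0 => (1 : ℝ)
  | _ + 1 => (one, 0)

instance instOne (n : ℕ) : One (CD n) := ⟨one⟩

/-- The Euclidean inner product on `A n = ℝ^(2^n)`. -/
def inner : {n : ℕ} → CD n → CD n → ℝ
  | 0, x, y => (x * y : ℝ)
  | _ + 1, x, y => inner x.1 y.1 + inner x.2 y.2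

/-- The Euclidean norm on `A n = ℝ^(2^n)`. -/
def norm {n : ℕ} (x : CD n) : ℝ := Real.sqrt (inner x x)

/-- `ã = (-a₂, a₁)`. -/
def tilde {n : ℕ} (a : CD (n + 1)) : CD (n + 1) := (-a.2, a.1)

/-- `ẽ₀ = (0, e₀)`. -/
def etilde (n : ℕ) : CD (n + 1) := ((0 : CD n), (1 : CD n))

/-- An element is pure if its conjugate is its negative. -/
def IsPure {n : ℕ} (a : CD n) : Prop := conj a = -a

/-- An element of `A (n+1)` is doubly pure if both of its coordinates are pure. -/
def IsDoublyPure {n : ℕ} (a : CD (n + 1)) : Prop := IsPure a.1 ∧ IsPure a.2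

/-- The associator `(a,b,c) = (ab)c - a(bc)`. -/
def assoc {n : ℕ} (a b c : CD n) : CD n := a * b * c - a * (b * c)

/-- An element is alternative if `(a,a,x) = 0` for all `x`. -/
def IsAlternative {n : ℕ} (a : CD n) : Prop := ∀ x : CD n, assoc a a x = 0

/-- An element is strongly alternative if `(a,a,x) = 0` and `(a,x,x) = 0` for all `x`. -/
def IsStronglyAlternative {n : ℕ} (a : CD n) : Prop :=
  (∀ x : CD n, assoc a a x = 0) ∧ (∀ x : CD n, assoc a x x = 0)

/-- The pure (imaginary) part of an element. -/
def im {n : ℕ} (a : CD n) : CD n := (2⁻¹ : ℝ) • (a - conj a)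

/-- `H a`, the span of `{e₀, ã, a, ẽ₀}`. -/
def H {n : ℕ} (a : CD (n + 1)) : Submodule ℝ (CD (n + 1)) :=
  Submodule.span ℝ {(1 : CD (n + 1)), tilde a, a, etilde n}

/-- The orthogonal complement of `H a`. -/
def Hperp {n : ℕ} (a : CD (n + 1)) : Set (CD (n + 1)) :=
  {x | ∀ y ∈ H a, inner y x = 0}

end CD

/-!
Right multiplication by `ẽ₀` is `x ↦ x̃`, and for doubly pure `b` one has `ẽ₀ b = -b̃`, so
`(a, ẽ₀, b) = ãb + ab̃`. For doubly pure `a, b` moreover `ẽ₀ (ab) = ab̃`, whence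
`(ẽ₀, a, b) = -(a, ẽ₀, b)`. Everything then follows from the anticommutation rule
`xy + yx = -2⟨x, y⟩ e₀` for pure `x, y`: it gives `ab̃ - ãb = 2⟨ã, b⟩ e₀ - 2⟨a, b⟩ ẽ₀`, which
vanishes on `H_a^⊥`; and a doubly pure element of `H_a` lies in `span {ã, a}`, on which
`b ↦ ãb + ab̃` vanishes because `ã` and `a` are orthogonal pure elements of the same norm.
-/

namespace CD

open Submodule

variable {n : ℕ}

theorem ext {x y : CD (n + 1)} (h1 : x.1 = y.1) (h2 : x.2 = y.2) : x = y := Prod.ext h1 h2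

@[simp] theorem fst_add (x y : CD (n + 1)) : (x + y).1 = x.1 + y.1 := rfl
@[simp] theorem snd_add (x y : CD (n + 1)) : (x + y).2 = x.2 + y.2 := rfl
@[simp] theorem fst_neg (x : CD (n + 1)) : (-x).1 = -x.1 := rfl
@[simp] theorem snd_neg (x : CD (n + 1)) : (-x).2 = -x.2 := rfl
@[simp] theorem fst_sub (x y : CD (n + 1)) : (x - y).1 = x.1 - y.1 := rfl
@[simp] theorem snd_sub (x y : CD (n + 1)) : (x - y).2 = x.2 - y.2 := rfl
@[simp] theorem fst_smul (r : ℝ) (x : CD (n + 1)) : (r • x).1 = r • x.1 := rfl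
@[simp] theorem snd_smul (r : ℝ) (x : CD (n + 1)) : (r • x).2 = r • x.2 := rfl
@[simp] theorem fst_zero : (0 : CD (n + 1)).1 = 0 := rfl
@[simp] theorem snd_zero : (0 : CD (n + 1)).2 = 0 := rfl
@[simp] theorem fst_one : (1 : CD (n + 1)).1 = 1 := rfl
@[simp] theorem snd_one : (1 : CD (n + 1)).2 = 0 := rfl
@[simp] theorem fst_mul (x y : CD (n + 1)) : (x * y).1 = x.1 * y.1 - conj y.2 * x.2 := rfl
@[simp] theorem snd_mul (x y : CD (n + 1)) : (x * y).2 = y.2 * x.1 + x.2 * conj y.1 := rfl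
@[simp] theorem fst_conj (x : CD (n + 1)) : (conj x).1 = conj x.1 := rfl
@[simp] theorem snd_conj (x : CD (n + 1)) : (conj x).2 = -x.2 := rfl
@[simp] theorem inner_succ (x y : CD (n + 1)) : inner x y = inner x.1 y.1 + inner x.2 y.2 := rfl
@[simp] theorem fst_etilde : (etilde n).1 = 0 := rfl
@[simp] theorem snd_etilde : (etilde n).2 = 1 := rfl
@[simp] theorem fst_tilde (a : CD (n + 1)) : (tilde a).1 = -a.2 := rfl
@[simp] theorem snd_tilde (a : CD (n + 1)) : (tilde a).2 = a.1 := rfl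

theorem conj_add : ∀ {n : ℕ} (x y : CD n), conj (x + y) = conj x + conj y
  | 0, _, _ => rfl
  | _ + 1, x, y => ext (conj_add x.1 y.1) (neg_add _ _)

theorem conj_smul : ∀ {n : ℕ} (r : ℝ) (x : CD n), conj (r • x) = r • conj x
  | 0, _, _ => rfl
  | _ + 1, r, x => ext (conj_smul r x.1) (smul_neg r x.2).symm

def conjₗ (n : ℕ) : CD n →ₗ[ℝ] CD n where
  toFun := conj
  map_add' := conj_add
  map_smul' := conj_smul

theorem conj_neg (x : CD n) : conj (-x) = -conj x := (conjₗ n).map_neg x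

theorem conj_sub (x y : CD n) : conj (x - y) = conj x - conj y := (conjₗ n).map_sub x y

theorem conj_zero : conj (0 : CD n) = 0 := (conjₗ n).map_zero

theorem conj_one : ∀ {n : ℕ}, conj (1 : CD n) = 1
  | 0 => rfl
  | _ + 1 => ext conj_one neg_zero

theorem conj_conj : ∀ {n : ℕ} (x : CD n), conj (conj x) = x
  | 0, _ => rfl
  | _ + 1, x => ext (conj_conj x.1) (neg_neg x.2)

theorem mul_add_and_add_mul : ∀ {n : ℕ},
    (∀ x y z : CD n, x * (y + z) = x * y + x * z) ∧ (∀ x y z : CD n, (x + y) * z = x * z + y * z)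
  | 0 => ⟨fun (x y z : ℝ) => mul_add x y z, fun (x y z : ℝ) => add_mul x y z⟩
  | n + 1 => by
    obtain ⟨ih₁, ih₂⟩ := mul_add_and_add_mul (n := n)
    constructor <;> intro x y z <;> apply ext <;> simp only [fst_mul, snd_mul, fst_add, snd_add,
      conj_add, ih₁, ih₂] <;> abel

theorem zero_mul_and_mul_zero : ∀ {n : ℕ}, (∀ x : CD n, 0 * x = 0) ∧ (∀ x : CD n, x * 0 = 0)
  | 0 => ⟨zero_mul (M₀ := ℝ), mul_zero (M₀ := ℝ)⟩
  | n + 1 => by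
    obtain ⟨ih₁, ih₂⟩ := zero_mul_and_mul_zero (n := n)
    constructor <;> intro x <;> apply ext <;> simp [conj_zero, ih₁, ih₂]

theorem one_mul_and_mul_one : ∀ {n : ℕ}, (∀ x : CD n, 1 * x = x) ∧ (∀ x : CD n, x * 1 = x)
  | 0 => ⟨one_mul (M := ℝ), mul_one (M := ℝ)⟩
  | n + 1 => by
    obtain ⟨ih₁, ih₂⟩ := one_mul_and_mul_one (n := n)
    constructor <;> intro x <;> apply ext <;>
      simp [conj_zero, conj_one, ih₁, ih₂, zero_mul_and_mul_zero.1, zero_mul_and_mul_zero.2]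

theorem smul_mul_and_mul_smul : ∀ {n : ℕ}, (∀ (r : ℝ) (x y : CD n), r • x * y = r • (x * y)) ∧
    (∀ (r : ℝ) (x y : CD n), x * r • y = r • (x * y))
  | 0 => ⟨fun r (x y : ℝ) => smul_mul_assoc r x y, fun r (x y : ℝ) => mul_smul_comm r x y⟩
  | n + 1 => by
    obtain ⟨ih₁, ih₂⟩ := smul_mul_and_mul_smul (n := n)
    constructor <;> intro r x y <;> apply ext <;>
      simp only [fst_mul, snd_mul, fst_smul, snd_smul, conj_smul, ih₁, ih₂, smul_sub, smul_add]

-- Scoped, so that outside `CD` arithmetic on `CD n` still elaborates through `instAddCommGroup`,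
-- `instMul` and `instOne` directly.
scoped instance instNonAssocRing (n : ℕ) : NonAssocRing (CD n) where
  __ := instAddCommGroup n
  __ := instMul n
  __ := instOne n
  left_distrib := mul_add_and_add_mul.1
  right_distrib := mul_add_and_add_mul.2
  zero_mul := zero_mul_and_mul_zero.1
  mul_zero := zero_mul_and_mul_zero.2
  one_mul := one_mul_and_mul_one.1
  mul_one := one_mul_and_mul_one.2

scoped instance instIsScalarTower (n : ℕ) : IsScalarTower ℝ (CD n) (CD n) :=
  ⟨fun r x y => by rw [smul_eq_mul, smul_eq_mul, smul_mul_and_mul_smul.1]⟩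

scoped instance instSMulCommClass (n : ℕ) : SMulCommClass ℝ (CD n) (CD n) :=
  ⟨fun r x y => by rw [smul_eq_mul, smul_eq_mul, smul_mul_and_mul_smul.2]⟩

theorem conj_mul : ∀ {n : ℕ} (x y : CD n), conj (x * y) = conj y * conj x
  | 0, x, y => mul_comm (G := ℝ) x y
  | n + 1, x, y => by
    have ih : ∀ u v : CD n, conj (u * v) = conj v * conj u := fun u v => conj_mul u v
    apply ext <;> simp only [fst_conj, snd_conj, fst_mul, snd_mul, conj_sub, conj_neg, ih,
      conj_conj, neg_mul, mul_neg] <;> abel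

theorem inner_comm : ∀ {n : ℕ} (x y : CD n), inner x y = inner y x
  | 0, x, y => mul_comm (G := ℝ) x y
  | _ + 1, x, y => by rw [inner_succ, inner_succ, inner_comm x.1, inner_comm x.2]

theorem inner_neg_left : ∀ {n : ℕ} (x y : CD n), inner (-x) y = -inner x y
  | 0, x, y => neg_mul (α := ℝ) x y
  | _ + 1, x, y => by
    rw [inner_succ, inner_succ, fst_neg, snd_neg, inner_neg_left, inner_neg_left, neg_add]

theorem inner_neg_right (x y : CD n) : inner x (-y) = -inner x y := by
  rw [inner_comm, inner_neg_left, inner_comm]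

theorem conj_mul_add_conj_mul : ∀ {n : ℕ} (x y : CD n),
    conj x * y + conj y * x = (2 * inner x y) • (1 : CD n)
  | 0, x, y => (fun a b : ℝ => show a * b + b * a = 2 * (a * b) * 1 by ring) x y
  | _ + 1, x, y => by
    apply ext
    · simp only [fst_add, fst_mul, fst_conj, snd_conj, fst_smul, fst_one, inner_succ, mul_neg,
        sub_neg_eq_add, mul_add, add_smul, ← conj_mul_add_conj_mul x.1 y.1,
        ← conj_mul_add_conj_mul x.2 y.2]
      abel
    · simp only [snd_add, snd_mul, fst_conj, snd_conj, snd_smul, snd_one, neg_mul, smul_zero]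
      abel

theorem IsPure.mul_add_mul {x y : CD n} (hx : IsPure x) (hy : IsPure y) :
    x * y + y * x = -((2 * inner x y) • 1) := by
  rw [← conj_mul_add_conj_mul, hx, hy, neg_mul, neg_mul, neg_add, neg_neg, neg_neg]

theorem IsPure.mul_self {x : CD n} (hx : IsPure x) : x * x = -(inner x x • 1) := by
  have h := hx.mul_add_mul hx
  rw [mul_smul, ← two_smul ℝ (x * x)] at h
  exact smul_right_injective _ two_ne_zero (h.trans (smul_neg _ _).symm)

theorem IsPure.conj_eq {x : CD n} (hx : IsPure x) : conj x = -x := hx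

theorem IsPure.eq_zero_of_conj_eq_self {x : CD n} (hx : IsPure x) (h : conj x = x) : x = 0 := by
  have h₂ : (2 : ℝ) • x = 0 := by
    rw [two_smul]
    nth_rewrite 2 [← h]
    rw [hx.conj_eq, add_neg_cancel]
  exact (smul_eq_zero.1 h₂).resolve_left two_ne_zero

def pureSubmodule (n : ℕ) : Submodule ℝ (CD n) := LinearMap.ker (conjₗ n + LinearMap.id)

theorem mem_pureSubmodule {x : CD n} : x ∈ pureSubmodule n ↔ IsPure x :=
  add_eq_zero_iff_eq_neg

def doublyPureSubmodule (n : ℕ) : Submodule ℝ (CD (n + 1)) :=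
  (pureSubmodule n).prod (pureSubmodule n)

theorem mem_doublyPureSubmodule {x : CD (n + 1)} :
    x ∈ doublyPureSubmodule n ↔ IsDoublyPure x :=
  and_congr mem_pureSubmodule mem_pureSubmodule

theorem IsDoublyPure.isPure {a : CD (n + 1)} (ha : IsDoublyPure a) : IsPure a :=
  ext ha.1 rfl

theorem IsDoublyPure.tilde {a : CD (n + 1)} (ha : IsDoublyPure a) : IsDoublyPure (tilde a) :=
  ⟨(conj_neg a.2).trans (congrArg Neg.neg ha.2), ha.1⟩

theorem tilde_add (a b : CD (n + 1)) : tilde (a + b) = tilde a + tilde b := ext (neg_add _ _) rfl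

theorem tilde_smul (r : ℝ) (a : CD (n + 1)) : tilde (r • a) = r • tilde a :=
  ext (smul_neg r a.2).symm rfl

theorem tilde_tilde (a : CD (n + 1)) : tilde (tilde a) = -a := rfl

theorem inner_tilde_self (a : CD (n + 1)) : inner (tilde a) a = 0 := by
  rw [inner_succ, fst_tilde, snd_tilde, inner_neg_left, inner_comm a.1, neg_add_cancel]

theorem inner_tilde_tilde (a : CD (n + 1)) : inner (tilde a) (tilde a) = inner a a := by
  rw [inner_succ, inner_succ, fst_tilde, snd_tilde, inner_neg_left, inner_neg_right, neg_neg,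
    add_comm]

theorem mul_etilde (x : CD (n + 1)) : x * etilde n = tilde x := by
  apply ext <;> simp [conj_one, conj_zero]

theorem etilde_mul {x : CD (n + 1)} (hx : IsDoublyPure x) : etilde n * x = -tilde x := by
  apply ext <;> simp [hx.1.conj_eq, hx.2.conj_eq]

theorem etilde_mul_mul {a b : CD (n + 1)} (ha : IsDoublyPure a) (hb : IsDoublyPure b) :
    etilde n * (a * b) = a * tilde b := by
  have ha₁ := ha.1.conj_eq
  have ha₂ := ha.2.conj_eq
  have hb₁ := hb.1.conj_eq
  have hb₂ := hb.2.conj_eq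
  apply ext
  · simp only [fst_mul, snd_mul, fst_etilde, snd_etilde, fst_tilde, snd_tilde, conj_add, conj_mul,
      conj_neg, ha₁, ha₂, hb₁, hb₂, neg_mul, mul_neg, neg_neg, zero_mul, mul_one, zero_sub,
      neg_add_rev, sub_neg_eq_add]
    abel
  · simp only [fst_mul, snd_mul, fst_etilde, snd_etilde, fst_tilde, snd_tilde, conj_add, conj_mul,
      conj_neg, ha₁, ha₂, hb₁, hb₂, neg_mul, mul_neg, neg_neg, mul_zero, one_mul, zero_add,
      sub_neg_eq_add]

theorem mul_tilde_sub_tilde_mul {a b : CD (n + 1)} (ha : IsDoublyPure a) (hb : IsDoublyPure b) :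
    a * tilde b - tilde a * b = (2 * inner (tilde a) b) • 1 - (2 * inner a b) • etilde n := by
  have h₁₂ := ha.1.mul_add_mul hb.2
  have h₂₁ := ha.2.mul_add_mul hb.1
  have h₂₂ := ha.2.mul_add_mul hb.2
  have h₁₁ := ha.1.mul_add_mul hb.1
  apply ext
  · simp only [fst_sub, fst_mul, fst_tilde, snd_tilde, fst_smul, fst_one, fst_etilde, inner_succ,
      inner_neg_left, hb.1.conj_eq, hb.2.conj_eq, neg_mul, mul_neg]
    linear_combination (norm := module) h₂₁ - h₁₂
  · simp only [snd_sub, snd_mul, fst_tilde, snd_tilde, snd_smul, snd_one, snd_etilde, inner_succ,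
      hb.1.conj_eq, hb.2.conj_eq, mul_neg, conj_neg]
    linear_combination (norm := module) h₁₁ + h₂₂

theorem assoc_etilde_middle (a : CD (n + 1)) {b : CD (n + 1)} (hb : IsDoublyPure b) :
    assoc a (etilde n) b = tilde a * b + a * tilde b := by
  rw [assoc, mul_etilde, etilde_mul hb, mul_neg, sub_neg_eq_add]

theorem assoc_etilde_left {a b : CD (n + 1)} (ha : IsDoublyPure a) (hb : IsDoublyPure b) :
    assoc (etilde n) a b = -assoc a (etilde n) b := by
  rw [assoc, etilde_mul ha, etilde_mul_mul ha hb, assoc_etilde_middle a hb, neg_mul, neg_add,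
    sub_eq_add_neg]

theorem eq_zero_of_mem_span_one_etilde {y : CD (n + 1)} (hy : y ∈ span ℝ {1, etilde n})
    (hy' : IsDoublyPure y) : y = 0 := by
  obtain ⟨c, d, rfl⟩ := mem_span_pair.1 hy
  have hself : ∀ r : ℝ, conj (r • (1 : CD n)) = r • 1 := fun r => by rw [conj_smul, conj_one]
  apply ext
  · simpa using hy'.1.eq_zero_of_conj_eq_self (by simpa using hself c)
  · simpa using hy'.2.eq_zero_of_conj_eq_self (by simpa using hself d)

theorem H_eq_span_one_etilde_sup (a : CD (n + 1)) :
    H a = span ℝ {1, etilde n} ⊔ span ℝ {tilde a, a} := by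
  rw [H, ← span_union]
  congr 1
  ext
  simp only [Set.mem_insert_iff, Set.mem_singleton_iff, Set.mem_union]
  tauto

theorem mem_span_tilde_self_of_mem_H {a b : CD (n + 1)} (ha : IsDoublyPure a)
    (hb : IsDoublyPure b) (hbH : b ∈ H a) : b ∈ span ℝ {tilde a, a} := by
  rw [H_eq_span_one_etilde_sup] at hbH
  obtain ⟨y, hy, z, hz, rfl⟩ := mem_sup.1 hbH
  have hz' : z ∈ doublyPureSubmodule n := by
    refine span_le.2 ?_ hz
    simp only [Set.insert_subset_iff, Set.singleton_subset_iff, SetLike.mem_coe,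
      mem_doublyPureSubmodule]
    exact ⟨ha.tilde, ha⟩
  have hy' : IsDoublyPure y := by
    rw [← mem_doublyPureSubmodule, ← add_sub_cancel_right y z]
    exact sub_mem (mem_doublyPureSubmodule.2 hb) hz'
  rwa [eq_zero_of_mem_span_one_etilde hy hy', zero_add]

theorem tilde_mul_add_mul_tilde_of_mem_span {a b : CD (n + 1)} (ha : IsDoublyPure a)
    (hb : b ∈ span ℝ {tilde a, a}) : tilde a * b + a * tilde b = 0 := by
  obtain ⟨c, d, rfl⟩ := mem_span_pair.1 hb
  have h₁ : tilde a * tilde a = a * a := by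
    rw [ha.tilde.isPure.mul_self, ha.isPure.mul_self, inner_tilde_tilde]
  have h₂ : tilde a * a + a * tilde a = 0 := by
    rw [ha.tilde.isPure.mul_add_mul ha.isPure, inner_tilde_self, mul_zero, zero_smul, neg_zero]
  rw [tilde_add, tilde_smul, tilde_smul, tilde_tilde]
  simp only [mul_add, mul_smul_comm, mul_neg, smul_neg]
  linear_combination (norm := module) c • h₁ + d • h₂

end CD

theorem assoc_etilde_of_mem_H_or_Hperp_general (n : ℕ) (a b : CD (n + 1))
    (ha : CD.IsDoublyPure a) (hb : CD.IsDoublyPure b) :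
    (b ∈ CD.H a → CD.assoc a (CD.etilde n) b = 0 ∧ CD.assoc (CD.etilde n) a b = 0) ∧
    (b ∈ CD.Hperp a →
      CD.assoc a (CD.etilde n) b = (2 : ℝ) • (CD.tilde a * b) ∧
      CD.assoc (CD.etilde n) a b = -((2 : ℝ) • (CD.tilde a * b))) := by
  rw [CD.assoc_etilde_left ha hb, CD.assoc_etilde_middle a hb]
  refine ⟨fun hbH => ?_, fun hbH => ?_⟩
  · rw [CD.tilde_mul_add_mul_tilde_of_mem_span ha (CD.mem_span_tilde_self_of_mem_H ha hb hbH),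
      neg_zero]
    exact ⟨rfl, rfl⟩
  · have hperp : CD.inner (CD.tilde a) b = 0 ∧ CD.inner a b = 0 :=
      ⟨hbH _ (Submodule.subset_span (by simp)), hbH _ (Submodule.subset_span (by simp))⟩
    have hcomm := CD.mul_tilde_sub_tilde_mul ha hb
    rw [hperp.1, hperp.2, mul_zero, zero_smul, zero_smul, sub_zero, sub_eq_zero] at hcomm
    rw [hcomm, ← two_smul ℝ]
    exact ⟨rfl, rfl⟩

/-- For `n ≥ 3` and doubly pure `a, b`: if `b ∈ H a` then
`(a, ẽ₀, b) = 0 = (ẽ₀, a, b)`, while if `b ∈ H a ^ ⊥` then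
`(a, ẽ₀, b) = 2ãb` and `(ẽ₀, a, b) = −2ãb`. -/
theorem assoc_etilde_of_mem_H_or_Hperp (n : ℕ) (hn : 3 ≤ n + 1) (a b : CD (n + 1))
    (ha : CD.IsDoublyPure a) (hb : CD.IsDoublyPure b) :
    (b ∈ CD.H a → CD.assoc a (CD.etilde n) b = 0 ∧ CD.assoc (CD.etilde n) a b = 0) ∧
    (b ∈ CD.Hperp a →
      CD.assoc a (CD.etilde n) b = (2 : ℝ) • (CD.tilde a * b) ∧
      CD.assoc (CD.etilde n) a b = -((2 : ℝ) • (CD.tilde a * b))) :=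
  assoc_etilde_of_mem_H_or_Hperp_general n a b ha hb
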